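/- For b ≥ 0, real λ with 0 < λ ≤ ε < 1 and x, t ≥ 1, using the small-argument asymptotics J_b(λ) ~ (λ/2)^b/Γ(b+1) and Y_b(λ) ~ −(Γ(b)/2)(2/λ)^b (b>0), one has the pointwise bound |G_b(λ,x)G_b(λ,t)·λ/(J_b(λ)² + Y_b(λ)²)| ≤ c_b·((xt)^b + (x/t)^b + (t/x)^b + (xt)^{−b}) for some constant c_b > 0 depending only on b and ε. -/

import Mathlib

/-!
For `λ ≤ 1` the small-argument bounds `|J_b(λ)| ≲ λ^b`, `|Y_b(λ)| ≲ λ^{-b}` cancel the powers of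
`λ` coming from `J_b(λx)` and `Y_b(λx)`, so `|G_b(λ,x)| ≲ x^b + x^{-b}` uniformly in `λ`; and the
lower bound `J_b(λ)² + Y_b(λ)² ≳ λ^{-2b} ≥ λ` makes `λ / (J_b(λ)² + Y_b(λ)²)` bounded. Multiplying,
`(x^b + x^{-b})(t^b + t^{-b})` expands to the four terms of the claimed bound.
-/

open Real

def cylinder (J Y : ℝ → ℝ) (lam x : ℝ) : ℝ :=
  Y lam * J (lam * x) - J lam * Y (lam * x)

section BesselBounds

variable {J Y : ℝ → ℝ} {b C : ℝ}

theorem abs_le_mul_rpow_of_small_of_large (hb : 0 ≤ b)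
    (hsmall : ∀ w : ℝ, 0 < w → w ≤ 1 → |J w| ≤ C * w ^ b)
    (hlarge : ∀ w : ℝ, 1 ≤ w → |J w| ≤ C) {w : ℝ} (hw : 0 < w) :
    |J w| ≤ C * w ^ b := by
  have hC : 0 ≤ C := (abs_nonneg _).trans (hlarge 1 le_rfl)
  rcases le_or_gt w 1 with h | h
  · exact hsmall w hw h
  · calc |J w| ≤ C * 1 := by simpa using hlarge w h.le
      _ ≤ C * w ^ b := by gcongr; exact one_le_rpow h.le hb

theorem abs_le_mul_rpow_neg_add_rpow_of_small_of_large (hb : 0 ≤ b)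
    (hsmall : ∀ w : ℝ, 0 < w → w ≤ 1 → |Y w| ≤ C * w ^ (-b))
    (hlarge : ∀ w : ℝ, 1 ≤ w → |Y w| ≤ C) {w : ℝ} (hw : 0 < w) :
    |Y w| ≤ C * (w ^ (-b) + w ^ b) := by
  have hC : 0 ≤ C := (abs_nonneg _).trans (hlarge 1 le_rfl)
  have hpos : 0 < w ^ b := rpow_pos_of_pos hw b
  have hneg : 0 < w ^ (-b) := rpow_pos_of_pos hw (-b)
  rcases le_or_gt w 1 with h | h
  · nlinarith [hsmall w hw h]
  · nlinarith [hlarge w h.le, one_le_rpow h.le hb]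

theorem abs_cylinder_le (hb : 0 ≤ b) (hC : 0 ≤ C)
    (hJ : ∀ w : ℝ, 0 < w → |J w| ≤ C * w ^ b)
    (hY : ∀ w : ℝ, 0 < w → |Y w| ≤ C * (w ^ (-b) + w ^ b))
    {lam z : ℝ} (hlam : 0 < lam) (hlam1 : lam ≤ 1) (hz : 0 < z) :
    |cylinder J Y lam z| ≤ 3 * C ^ 2 * (z ^ b + z ^ (-b)) := by
  set a := lam ^ b
  set s := z ^ b
  have ha : 0 < a := rpow_pos_of_pos hlam b
  have ha1 : a ≤ 1 := rpow_le_one hlam.le hlam1 hb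
  have hs : 0 < s := rpow_pos_of_pos hz b
  have hmul : (lam * z) ^ b = a * s := mul_rpow hlam.le hz.le
  have hmul_neg : (lam * z) ^ (-b) = a⁻¹ * s⁻¹ := by
    rw [rpow_neg (mul_pos hlam hz).le, hmul, mul_inv]
  have hYlam : |Y lam| ≤ C * (a⁻¹ + a) := by simpa [rpow_neg hlam.le] using hY lam hlam
  have hJlz : |J (lam * z)| ≤ C * (a * s) := by simpa [hmul] using hJ _ (mul_pos hlam hz)
  have hYlz : |Y (lam * z)| ≤ C * (a⁻¹ * s⁻¹ + a * s) := by
    simpa [hmul, hmul_neg] using hY _ (mul_pos hlam hz)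
  have hfirst : |Y lam| * |J (lam * z)| ≤ C ^ 2 * ((1 + a ^ 2) * s) := by
    calc |Y lam| * |J (lam * z)| ≤ C * (a⁻¹ + a) * (C * (a * s)) := by gcongr
      _ = C ^ 2 * ((1 + a ^ 2) * s) := by field_simp
  have hsecond : |J lam| * |Y (lam * z)| ≤ C ^ 2 * (s⁻¹ + a ^ 2 * s) := by
    calc |J lam| * |Y (lam * z)| ≤ C * a * (C * (a⁻¹ * s⁻¹ + a * s)) := by
          gcongr; exact hJ lam hlam
      _ = C ^ 2 * (s⁻¹ + a ^ 2 * s) := by field_simp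
  have ha2 : a ^ 2 ≤ 1 := pow_le_one₀ ha.le ha1
  rw [rpow_neg hz.le]
  calc |cylinder J Y lam z| ≤ |Y lam| * |J (lam * z)| + |J lam| * |Y (lam * z)| := by
        rw [cylinder, ← abs_mul, ← abs_mul]; exact abs_sub _ _
    _ ≤ C ^ 2 * ((1 + a ^ 2) * s) + C ^ 2 * (s⁻¹ + a ^ 2 * s) := add_le_add hfirst hsecond
    _ ≤ 3 * C ^ 2 * (s + s⁻¹) := by
        have : 0 ≤ C ^ 2 * ((1 - a ^ 2) * s) := by
          have := sub_nonneg.mpr ha2; positivity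
        nlinarith [inv_pos.mpr hs, sq_nonneg C]

end BesselBounds

theorem abs_div_le_inv_of_mul_rpow_neg_le {lam D b c : ℝ} (hlam : 0 < lam) (hlam1 : lam ≤ 1)
    (hb : 0 ≤ b) (hc : 0 < c) (hD : c * lam ^ (-(2 * b)) ≤ D) :
    |lam / D| ≤ c⁻¹ := by
  have hpow : lam ≤ lam ^ (-(2 * b)) :=
    hlam1.trans (one_le_rpow_of_pos_of_le_one_of_nonpos hlam hlam1 (by linarith))
  have hcD : c * lam ≤ D := hD.trans' (by gcongr)
  have hDpos : 0 < D := lt_of_lt_of_le (by positivity) hcD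
  rw [abs_of_pos (div_pos hlam hDpos), div_le_iff₀ hDpos, inv_mul_eq_div, le_div_iff₀ hc,
    mul_comm]
  exact hcD

theorem rpow_add_rpow_neg_mul_rpow_add_rpow_neg {x t : ℝ} (hx : 0 < x) (ht : 0 < t) (b : ℝ) :
    (x ^ b + x ^ (-b)) * (t ^ b + t ^ (-b)) =
      (x * t) ^ b + (x / t) ^ b + (t / x) ^ b + (x * t) ^ (-b) := by
  rw [mul_rpow hx.le ht.le, mul_rpow hx.le ht.le, div_rpow hx.le ht.le, div_rpow ht.le hx.le,
    rpow_neg hx.le, rpow_neg ht.le, div_eq_mul_inv, div_eq_mul_inv]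
  ring

theorem stmt10_general (b : ℝ) (hb : 0 < b) (ε : ℝ) (hε1 : ε < 1)
    (J Y : ℝ → ℝ) (Cb cb : ℝ) (hCb : 0 < Cb) (hcb : 0 < cb)
    (hJsmall : ∀ w : ℝ, 0 < w → w ≤ 1 → |J w| ≤ Cb * w ^ b)
    (hYsmall : ∀ w : ℝ, 0 < w → w ≤ 1 → |Y w| ≤ Cb * w ^ (-b))
    (hJlarge : ∀ w : ℝ, 1 ≤ w → |J w| ≤ Cb)
    (hYlarge : ∀ w : ℝ, 1 ≤ w → |Y w| ≤ Cb)
    (hlower : ∀ lam : ℝ, 0 < lam → lam ≤ ε → cb * lam ^ (-(2 * b)) ≤ J lam ^ 2 + Y lam ^ 2)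
    (G : ℝ → ℝ → ℝ) (hG : G = fun lam x => Y lam * J (lam * x) - J lam * Y (lam * x)) :
    ∃ c > (0:ℝ), ∀ lam : ℝ, 0 < lam → lam ≤ ε → ∀ x t : ℝ, 1 ≤ x → 1 ≤ t →
      |G lam x * G lam t * lam / (J lam ^ 2 + Y lam ^ 2)| ≤
        c * ((x * t) ^ b + (x / t) ^ b + (t / x) ^ b + (x * t) ^ (-b)) := by
  have hG' : G = cylinder J Y := hG
  subst hG'
  refine ⟨9 * Cb ^ 4 / cb, by positivity, fun lam hlam hlamε x t hx ht => ?_⟩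
  have hlam1 : lam ≤ 1 := hlamε.trans hε1.le
  have hJ := fun w (hw : 0 < w) => abs_le_mul_rpow_of_small_of_large hb.le hJsmall hJlarge hw
  have hY := fun w (hw : 0 < w) =>
    abs_le_mul_rpow_neg_add_rpow_of_small_of_large hb.le hYsmall hYlarge hw
  have hGx := abs_cylinder_le hb.le hCb.le hJ hY hlam hlam1 (zero_lt_one.trans_le hx)
  have hGt := abs_cylinder_le hb.le hCb.le hJ hY hlam hlam1 (zero_lt_one.trans_le ht)
  have hquot := abs_div_le_inv_of_mul_rpow_neg_le hlam hlam1 hb.le hcb (hlower lam hlam hlamε)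
  rw [← rpow_add_rpow_neg_mul_rpow_add_rpow_neg (zero_lt_one.trans_le hx)
    (zero_lt_one.trans_le ht), mul_div_assoc, abs_mul, abs_mul]
  calc _ ≤ 3 * Cb ^ 2 * (x ^ b + x ^ (-b)) * (3 * Cb ^ 2 * (t ^ b + t ^ (-b))) * cb⁻¹ := by
        gcongr
    _ = _ := by ring

/-- small-λ bound for the spectral-measure kernel: given the standard
small- and large-argument bounds for J_b, Y_b and the lower bound on J_b² + Y_b²,
|G_b(λ,x)G_b(λ,t)·λ/(J_b(λ)²+Y_b(λ)²)| ≤ c_b((xt)^b + (x/t)^b + (t/x)^b + (xt)^{−b})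
for 0 < λ ≤ ε and x, t ≥ 1. -/
theorem stmt10 (b : ℝ) (hb : 0 < b) (ε : ℝ) (hε : 0 < ε) (hε1 : ε < 1)
    (J Y : ℝ → ℝ) (Cb cb : ℝ) (hCb : 0 < Cb) (hcb : 0 < cb)
    (hJsmall : ∀ w : ℝ, 0 < w → w ≤ 1 → |J w| ≤ Cb * w ^ b)
    (hYsmall : ∀ w : ℝ, 0 < w → w ≤ 1 → |Y w| ≤ Cb * w ^ (-b))
    (hJlarge : ∀ w : ℝ, 1 ≤ w → |J w| ≤ Cb)
    (hYlarge : ∀ w : ℝ, 1 ≤ w → |Y w| ≤ Cb)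
    (hlower : ∀ lam : ℝ, 0 < lam → lam ≤ ε → cb * lam ^ (-(2 * b)) ≤ J lam ^ 2 + Y lam ^ 2)
    (G : ℝ → ℝ → ℝ) (hG : G = fun lam x => Y lam * J (lam * x) - J lam * Y (lam * x)) :
    ∃ c > (0:ℝ), ∀ lam : ℝ, 0 < lam → lam ≤ ε → ∀ x t : ℝ, 1 ≤ x → 1 ≤ t →
      |G lam x * G lam t * lam / (J lam ^ 2 + Y lam ^ 2)| ≤
        c * ((x * t) ^ b + (x / t) ^ b + (t / x) ^ b + (x * t) ^ (-b)) :=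
  stmt10_general b hb ε hε1 J Y Cb cb hCb hcb hJsmall hYsmall hJlarge hYlarge hlower G hG
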